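/- The function g(x) := − log(Q(x)) is convex on ℝ. -/

import Mathlib

/-!
With `φ` the standard normal density, `(-log Q)' = φ / Q`, so convexity amounts to monotonicity of
the inverse Mills ratio `φ / Q`. Since `φ' = -x φ`, its derivative is `φ (φ - x Q) / Q²`, and
`x Q(x) ≤ φ(x)` is the Mills inequality: for `x > 0`,
`x ∫_x^∞ φ ≤ ∫_x^∞ t φ(t) dt = φ(x)`.
-/

/-- The standard Gaussian upper-tail function `Q(x) = ∫_x^∞ (1/√(2π)) e^{−t²/2} dt`. -/
noncomputable def gaussQ (x : ℝ) : ℝ :=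
  ∫ t in Set.Ici x, (Real.sqrt (2 * Real.pi))⁻¹ * Real.exp (-t ^ 2 / 2)

open Real MeasureTheory Set Filter Topology ProbabilityTheory

theorem hasDerivAt_integral_Ici {E : Type*} [NormedAddCommGroup E] [NormedSpace ℝ E]
    [CompleteSpace E] {f : ℝ → E} (hf : Continuous f) (hfi : Integrable f) (x : ℝ) :
    HasDerivAt (fun y => ∫ t in Ici y, f t) (-f x) x := by
  have tail_eq_total_sub : ∀ y, ∫ t in Ici y, f t = (∫ t, f t) - ∫ t in Iic y, f t := by
    intro y
    rw [integral_Ici_eq_integral_Ioi, ← intervalIntegral.integral_Iic_add_Ioi hfi.integrableOn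
      hfi.integrableOn, add_sub_cancel_left]
  have tail_eq_const_sub : (fun y => ∫ t in Ici y, f t) =
      fun y => (∫ t in Ici 0, f t) - ∫ t in (0 : ℝ)..y, f t := by
    ext y
    rw [tail_eq_total_sub, tail_eq_total_sub,
      ← intervalIntegral.integral_Iic_sub_Iic hfi.integrableOn hfi.integrableOn]
    abel
  rw [tail_eq_const_sub]
  simpa using (hf.integral_hasStrictDerivAt 0 x).hasDerivAt.const_sub _

theorem hasDerivAt_gaussianPDFReal (μ : ℝ) (v : NNReal) (x : ℝ) :
    HasDerivAt (gaussianPDFReal μ v) (-(x - μ) / v * gaussianPDFReal μ v x) x := by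
  have hexp : HasDerivAt (fun t => -(t - μ) ^ 2 / (2 * v)) (-(x - μ) / v) x := by
    refine ((((hasDerivAt_id x).sub_const μ).pow 2).neg.div_const (2 * (v : ℝ))).congr_deriv ?_
    simp only [id, Nat.cast_ofNat]; ring
  rw [gaussianPDFReal_def]
  exact (hexp.exp.const_mul _).congr_deriv (by ring)

lemma continuous_gaussianPDFReal (μ : ℝ) (v : NNReal) : Continuous (gaussianPDFReal μ v) :=
  continuous_iff_continuousAt.2 fun x => (hasDerivAt_gaussianPDFReal μ v x).continuousAt

lemma tendsto_gaussianPDFReal_atTop (μ : ℝ) (v : NNReal) :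
    Tendsto (gaussianPDFReal μ v) atTop (𝓝 0) := by
  rcases eq_or_ne v 0 with rfl | hv
  · exact tendsto_const_nhds.congr fun t => by simp
  have hexp : Tendsto (fun t => -(t - μ) ^ 2 / (2 * v)) atTop atBot := by
    refine Tendsto.atBot_div_const (by positivity) ?_
    exact tendsto_neg_atTop_atBot.comp
      ((tendsto_pow_atTop two_ne_zero).comp (tendsto_atTop_add_const_right _ _ tendsto_id))
  simpa [gaussianPDFReal_def] using (tendsto_exp_atBot.comp hexp).const_mul (√(2 * π * v))⁻¹

lemma gaussQ_eq_integral_gaussianPDFReal (x : ℝ) :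
    gaussQ x = ∫ t in Ici x, gaussianPDFReal 0 1 t := by
  simp [gaussQ, gaussianPDFReal]

lemma gaussQ_pos (x : ℝ) : 0 < gaussQ x := by
  rw [gaussQ_eq_integral_gaussianPDFReal, setIntegral_pos_iff_support_of_nonneg_ae
    (Eventually.of_forall (gaussianPDFReal_nonneg 0 1))
    (integrable_gaussianPDFReal 0 1).integrableOn]
  have : Function.support (gaussianPDFReal 0 1) = univ :=
    eq_univ_of_forall fun t => (gaussianPDFReal_pos 0 1 t one_ne_zero).ne'
  simp [this]

lemma hasDerivAt_gaussQ (x : ℝ) : HasDerivAt gaussQ (-gaussianPDFReal 0 1 x) x := by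
  rw [funext gaussQ_eq_integral_gaussianPDFReal]
  exact hasDerivAt_integral_Ici (continuous_gaussianPDFReal 0 1) (integrable_gaussianPDFReal 0 1) x

lemma mul_gaussQ_le (x : ℝ) : x * gaussQ x ≤ gaussianPDFReal 0 1 x := by
  rcases le_or_gt x 0 with hx | hx
  · exact (mul_nonpos_of_nonpos_of_nonneg hx (gaussQ_pos x).le).trans
      (gaussianPDFReal_nonneg 0 1 x)
  have hderiv : ∀ t ∈ Ioi x, HasDerivAt (fun t => -gaussianPDFReal 0 1 t)
      (t * gaussianPDFReal 0 1 t) t := fun t _ =>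
    (hasDerivAt_gaussianPDFReal 0 1 t).neg.congr_deriv (by simp)
  have hcont := (continuous_gaussianPDFReal 0 1).neg.continuousWithinAt (s := Ici x) (x := x)
  have hnonneg : ∀ t ∈ Ioi x, 0 ≤ t * gaussianPDFReal 0 1 t := fun t ht =>
    mul_nonneg (hx.le.trans ht.le) (gaussianPDFReal_nonneg 0 1 t)
  have hlim := (tendsto_gaussianPDFReal_atTop 0 1).neg
  calc x * gaussQ x = ∫ t in Ioi x, x * gaussianPDFReal 0 1 t := by
        rw [gaussQ_eq_integral_gaussianPDFReal, integral_Ici_eq_integral_Ioi, integral_const_mul]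
    _ ≤ ∫ t in Ioi x, t * gaussianPDFReal 0 1 t :=
        setIntegral_mono_on ((integrable_gaussianPDFReal 0 1).integrableOn.const_mul x)
          (integrableOn_Ioi_deriv_of_nonneg hcont hderiv hnonneg hlim) measurableSet_Ioi
          fun t ht => mul_le_mul_of_nonneg_right ht.le (gaussianPDFReal_nonneg 0 1 t)
    _ = gaussianPDFReal 0 1 x := by
        simpa using integral_Ioi_of_hasDerivAt_of_nonneg hcont hderiv hnonneg hlim

noncomputable def invMillsRatio (x : ℝ) : ℝ := gaussianPDFReal 0 1 x / gaussQ x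

lemma hasDerivAt_invMillsRatio (x : ℝ) :
    HasDerivAt invMillsRatio
      (gaussianPDFReal 0 1 x * (gaussianPDFReal 0 1 x - x * gaussQ x) / gaussQ x ^ 2) x :=
  ((hasDerivAt_gaussianPDFReal 0 1 x).div (hasDerivAt_gaussQ x) (gaussQ_pos x).ne').congr_deriv
    (by simp only [NNReal.coe_one, div_one, sub_zero]; ring)

lemma monotone_invMillsRatio : Monotone invMillsRatio :=
  monotone_of_hasDerivAt_nonneg hasDerivAt_invMillsRatio fun x =>
    div_nonneg (mul_nonneg (gaussianPDFReal_nonneg 0 1 x) (sub_nonneg.2 (mul_gaussQ_le x)))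
      (sq_nonneg _)

lemma hasDerivAt_neg_log_gaussQ (x : ℝ) :
    HasDerivAt (fun y => -log (gaussQ y)) (invMillsRatio x) x :=
  ((hasDerivAt_gaussQ x).log (gaussQ_pos x).ne').neg.congr_deriv (by rw [invMillsRatio]; ring)

theorem neg_log_Q_convex :
    ConvexOn ℝ Set.univ fun x : ℝ => -Real.log (gaussQ x) := by
  refine Monotone.convexOn_univ_of_deriv
    (fun x => (hasDerivAt_neg_log_gaussQ x).differentiableAt) ?_
  rw [funext fun x => (hasDerivAt_neg_log_gaussQ x).deriv]
  exact monotone_invMillsRatio
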